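/- There exists a 3-dimensional pseudomanifold that is Mogami but not locally constructible (LC). In particular, the cone over a triangulated annulus from an external apex is Mogami but not LC. -/

import Mathlib

open Finset

namespace MogamiPaper

/-- A configuration of `N` labelled `d`-simplices with vertices in `V`:
facet `i` has vertex list `f i`. Vertex identifications (gluings) are recorded
by the labelling map. -/
abbrev Config (V : Type*) (d N : ℕ) := Fin N → Fin (d + 1) → V

variable {V : Type*} [DecidableEq V] {d N : ℕ}

/-- the vertex set of the `i`-th facet -/
def facet (f : Config V d N) (i : Fin N) : Finset V :=
  Finset.image (f i) Finset.univ

/-- each facet has `d+1` distinct vertices -/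
def Proper (f : Config V d N) : Prop := ∀ i, Function.Injective (f i)

/-- the facets containing a given set of vertices -/
def cells (f : Config V d N) (R : Finset V) : Finset (Fin N) :=
  Finset.univ.filter fun i => R ⊆ facet f i

/-- pseudomanifold: proper, and every `(d-1)`-face lies in at most two facets -/
def IsPseudo (f : Config V d N) : Prop :=
  Proper f ∧ ∀ R : Finset V, R.card = d → (cells f R).card ≤ 2

/-- a boundary `(d-1)`-face: contained in exactly one facet -/
def IsBdryRidge (f : Config V d N) (R : Finset V) : Prop :=
  R.card = d ∧ (cells f R).card = 1

/-- A gluing step: identify two distinct boundary `(d-1)`-faces `R`, `S`, whose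
intersection cardinality satisfies `P`, via a vertex identification `φ` that maps
`R` bijectively onto `S` and fixes everything outside `R`. -/
def Step (P : ℕ → Prop) (f g : Config V d N) : Prop :=
  ∃ R S : Finset V, IsBdryRidge f R ∧ IsBdryRidge f S ∧ R ≠ S ∧ P ((R ∩ S).card) ∧
    ∃ φ : V → V, (∀ v, v ∉ R → φ v = v) ∧ Set.InjOn φ ↑R ∧ R.image φ = S ∧
      ∀ i j, g i j = φ (f i j)

/-- Mogami gluing: the glued boundary facets share at least a vertex -/
def MogamiStep (f g : Config V d N) : Prop := Step (fun c => 1 ≤ c) f g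

/-- LC gluing: the glued boundary facets share a `(d-2)`-face -/
def LCStep (f g : Config V d N) : Prop := Step (fun c => c = d - 1) f g

/-- the dual graph: two facets are adjacent if they share a `(d-1)`-face -/
def dualGraph (f : Config V d N) : SimpleGraph (Fin N) :=
  SimpleGraph.fromRel fun i i' =>
    ∃ R : Finset V, R.card = d ∧ R ⊆ facet f i ∧ R ⊆ facet f i'

/-- UNITE: glue two disjoint boundary facets belonging to (dually) disconnected parts -/
def UniteStep (f g : Config V d N) : Prop :=
  ∃ R S : Finset V, IsBdryRidge f R ∧ IsBdryRidge f S ∧ Disjoint R S ∧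
    (∀ i ∈ cells f R, ∀ i' ∈ cells f S, ¬ (dualGraph f).Reachable i i') ∧
    ∃ φ : V → V, (∀ v, v ∉ R → φ v = v) ∧ Set.InjOn φ ↑R ∧ R.image φ = S ∧
      ∀ i j, g i j = φ (f i j)

/-- the canonical configuration of `N` pairwise disjoint `d`-simplices -/
def std (d N : ℕ) : Config (Fin N × Fin (d + 1)) d N := fun i j => (i, j)

/-- a tree of `d`-simplices (over the canonical vertex pool): obtained from `N`
disjoint simplices by UNITE steps, with connected (hence tree) dual graph -/
def IsTreeOfSimplicesC (t : Config (Fin N × Fin (d + 1)) d N) : Prop :=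
  Relation.ReflTransGen UniteStep (std d N) t ∧ (dualGraph t).Connected

/-- `g` represents `f` up to an injective relabeling of the used vertices -/
def Represents (g : Config (Fin N × Fin (d + 1)) d N) (f : Config V d N) : Prop :=
  ∃ e : Fin N × Fin (d + 1) → V,
    Set.InjOn e {x | ∃ i j, g i j = x} ∧ ∀ i j, f i j = e (g i j)

/-- Mogami: obtainable from a tree of `d`-simplices by Mogami gluings -/
def IsMogami (f : Config V d N) : Prop :=
  ∃ t g : Config (Fin N × Fin (d + 1)) d N,
    IsTreeOfSimplicesC t ∧ Relation.ReflTransGen MogamiStep t g ∧ Represents g f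

/-- locally constructible: obtainable from a tree of `d`-simplices by LC gluings -/
def IsLC (f : Config V d N) : Prop :=
  ∃ t g : Config (Fin N × Fin (d + 1)) d N,
    IsTreeOfSimplicesC t ∧ Relation.ReflTransGen LCStep t g ∧ Represents g f

/-- the geometric realization, as a subspace of `V → ℝ` -/
def realization [Fintype V] (f : Config V d N) : Set (V → ℝ) :=
  {x | (∀ v, 0 ≤ x v) ∧ (∑ v, x v) = 1 ∧ ∃ i : Fin N, ∀ v, x v ≠ 0 → v ∈ facet f i}

/-- a triangulated `d`-ball: realization homeomorphic to the unit ball of `ℝ^d` -/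
def IsBall [Fintype V] (f : Config V d N) : Prop :=
  Nonempty ((realization f) ≃ₜ
    (Metric.closedBall (0 : EuclideanSpace ℝ (Fin d)) 1 : Set (EuclideanSpace ℝ (Fin d))))

/-- all vertices lie on the boundary -/
def NoInteriorVertices (f : Config V d N) : Prop :=
  ∀ i j, ∃ R : Finset V, IsBdryRidge f R ∧ f i j ∈ R

/-- the cone over a configuration, with apex `v` -/
def cone (f : Config V d N) (v : V) : Config V (d + 1) N :=
  fun i => Fin.cons v (f i)

end MogamiPaper

/-!
The cone over the annulus is Mogami: cut open along one triangle through the apex it is a path of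
six tetrahedra, i.e. a tree of tetrahedra, and closing that triangle up again glues two boundary
triangles that share only the apex.

It is not LC by counting. Every gluing of two boundary triangles loses at least one triangle; a
UNITE step loses three vertices and an LC step exactly one. Starting from six disjoint tetrahedra
(24 vertices, 24 triangles), `u` UNITE and `L` LC steps leave `24 - 3u - L` vertices and at most
`24 - u - L` triangles, while the cone has 7 vertices and 18 triangles; no natural numbers `u`, `L`
fit.

The realization of the annulus is mapped affinely onto the region between two homothetic
triangles in the plane, which a radial rescaling turns into the round annulus; a continuous
bijection from a compact space onto a Hausdorff one is a homeomorphism.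
-/

namespace MogamiPaper

open Relation Metric

section Counting

variable {V W : Type*} {d N : ℕ}

lemma Proper.of_comp {f : Config V d N} {g : Config W d N} {φ : V → W}
    (hfg : ∀ i j, g i j = φ (f i j)) (hg : Proper g) : Proper f :=
  fun i j j' h => hg i (by rw [hfg, hfg, h])

lemma proper_std : Proper (std d N) :=
  fun _ _ _ h => (Prod.ext_iff.mp h).2

variable [DecidableEq V]

def vertices (f : Config V d N) : Finset V :=
  Finset.univ.biUnion (facet f)

def ridges (f : Config V d N) : Finset (Finset V) :=
  Finset.univ.biUnion fun i => (facet f i).powersetCard d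

lemma mem_facet {f : Config V d N} {i : Fin N} {x : V} : x ∈ facet f i ↔ ∃ j, f i j = x := by
  simp [facet]

lemma injOn_facet_of_proper {f : Config V d N} {g : Config W d N} {φ : V → W}
    (hfg : ∀ i j, g i j = φ (f i j)) (hg : Proper g) (i : Fin N) :
    Set.InjOn φ (facet f i) := by
  rintro _ hx _ hy e
  obtain ⟨j, rfl⟩ := mem_facet.mp hx
  obtain ⟨j', rfl⟩ := mem_facet.mp hy
  rw [← hfg, ← hfg] at e
  exact congrArg (f i) (hg i e)

lemma mem_vertices {f : Config V d N} {x : V} : x ∈ vertices f ↔ ∃ i j, f i j = x := by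
  simp [vertices, mem_facet]

lemma mem_ridges {f : Config V d N} {R : Finset V} :
    R ∈ ridges f ↔ (∃ i, R ⊆ facet f i) ∧ R.card = d := by
  simp [ridges, Finset.mem_powersetCard]

lemma facet_subset_vertices (f : Config V d N) (i : Fin N) : facet f i ⊆ vertices f :=
  Finset.subset_biUnion_of_mem (facet f) (Finset.mem_univ i)

lemma subset_vertices_of_mem_ridges {f : Config V d N} {R : Finset V} (hR : R ∈ ridges f) :
    R ⊆ vertices f :=
  let ⟨⟨i, hi⟩, _⟩ := mem_ridges.mp hR
  hi.trans (facet_subset_vertices f i)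

lemma IsBdryRidge.mem_ridges {f : Config V d N} {R : Finset V} (h : IsBdryRidge f R) :
    R ∈ ridges f := by
  obtain ⟨i, hi⟩ := Finset.card_pos.mp (h.2 ▸ Nat.one_pos : 0 < (cells f R).card)
  exact MogamiPaper.mem_ridges.mpr ⟨⟨i, (Finset.mem_filter.mp hi).2⟩, h.1⟩

lemma card_facet {f : Config V d N} (hf : Proper f) (i : Fin N) : (facet f i).card = d + 1 := by
  rw [facet, Finset.card_image_of_injective _ (hf i), Finset.card_univ, Fintype.card_fin]

lemma card_ridges_le {f : Config V d N} (hf : Proper f) : (ridges f).card ≤ N * (d + 1) := by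
  refine (Finset.card_biUnion_le_card_mul _ _ (d + 1) fun i _ => ?_).trans_eq (by simp)
  rw [Finset.card_powersetCard, card_facet hf, Nat.choose_succ_self_right]

lemma vertices_std : vertices (std d N) = Finset.univ :=
  Finset.eq_univ_of_forall fun x => mem_vertices.mpr ⟨x.1, x.2, rfl⟩

lemma card_vertices_std : (vertices (std d N)).card = N * (d + 1) := by
  simp [vertices_std]

section Map

variable [DecidableEq W]
variable {f : Config V d N} {g : Config W d N} {φ : V → W}

lemma facet_eq_image (hfg : ∀ i j, g i j = φ (f i j)) (i : Fin N) :
    facet g i = (facet f i).image φ := by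
  rw [facet, facet, Finset.image_image]
  exact congrArg (Finset.image · _) (funext (hfg i))

lemma vertices_eq_image (hfg : ∀ i j, g i j = φ (f i j)) :
    vertices g = (vertices f).image φ := by
  rw [vertices, vertices, Finset.biUnion_image]
  exact congrArg _ (funext (facet_eq_image hfg))

lemma ridges_eq_image (hfg : ∀ i j, g i j = φ (f i j)) (hg : Proper g) :
    ridges g = (ridges f).image (Finset.image φ) := by
  ext R'
  simp only [Finset.mem_image, mem_ridges, facet_eq_image hfg]
  constructor
  · rintro ⟨⟨i, hi⟩, hcard⟩
    obtain ⟨R, hR, rfl⟩ := Finset.subset_image_iff.mp hi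
    refine ⟨R, ⟨⟨i, hR⟩, ?_⟩, rfl⟩
    rwa [Finset.card_image_of_injOn ((injOn_facet_of_proper hfg hg i).mono hR)] at hcard
  · rintro ⟨R, ⟨⟨i, hR⟩, hcard⟩, rfl⟩
    exact ⟨⟨i, Finset.image_subset_image hR⟩,
      (Finset.card_image_of_injOn ((injOn_facet_of_proper hfg hg i).mono hR)).trans hcard⟩

end Map

lemma Represents.proper_and_card_eq {g : Config (Fin N × Fin (d + 1)) d N} {f : Config V d N}
    (h : Represents g f) (hf : Proper f) :
    Proper g ∧ (vertices g).card = (vertices f).card ∧ (ridges g).card = (ridges f).card := by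
  obtain ⟨e, he, hfg⟩ := h
  have he : Set.InjOn e (vertices g) := fun x hx y hy =>
    he (mem_vertices.mp hx) (mem_vertices.mp hy)
  refine ⟨hf.of_comp hfg, ?_, ?_⟩
  · rw [vertices_eq_image hfg, Finset.card_image_of_injOn he]
  · rw [ridges_eq_image hfg hf, Finset.card_image_of_injOn]
    exact (Finset.image_injOn_powerset_of_injOn he).mono fun R hR =>
      Finset.mem_powerset.mpr (subset_vertices_of_mem_ridges hR)

def IsGluing (f g : Config V d N) (R S : Finset V) : Prop :=
  IsBdryRidge f R ∧ IsBdryRidge f S ∧ R ≠ S ∧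
    ∃ φ : V → V, (∀ v, v ∉ R → φ v = v) ∧ R.image φ = S ∧ ∀ i j, g i j = φ (f i j)

section Gluing

variable {f g : Config V d N} {R S : Finset V}

lemma Step.exists_isGluing {P : ℕ → Prop} (h : Step P f g) :
    ∃ R S, IsGluing f g R S ∧ P (R ∩ S).card :=
  let ⟨R, S, hR, hS, hRS, hP, φ, hfix, _, himg, hfg⟩ := h
  ⟨R, S, ⟨hR, hS, hRS, φ, hfix, himg, hfg⟩, hP⟩

lemma UniteStep.exists_isGluing (hd : 0 < d) (h : UniteStep f g) :
    ∃ R S, IsGluing f g R S ∧ Disjoint R S := by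
  obtain ⟨R, S, hR, hS, hdisj, -, φ, hfix, -, himg, hfg⟩ := h
  refine ⟨R, S, ⟨hR, hS, ?_, φ, hfix, himg, hfg⟩, hdisj⟩
  rintro rfl
  rw [Finset.disjoint_self_iff_empty] at hdisj
  have hcard := hR.1
  simp [hdisj] at hcard
  omega

lemma IsGluing.proper_left (h : IsGluing f g R S) (hg : Proper g) : Proper f :=
  let ⟨_, _, _, _, _, _, hfg⟩ := h
  hg.of_comp hfg

lemma IsGluing.card_ridges_lt (h : IsGluing f g R S) (hg : Proper g) :
    (ridges g).card < (ridges f).card := by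
  obtain ⟨hR, hS, hRS, φ, hfix, himg, hfg⟩ := h
  obtain ⟨⟨i, hSi⟩, -⟩ := mem_ridges.mp hS.mem_ridges
  -- `φ` sends both `R` and `S` onto `S`
  have hφS : S.image φ = S := by
    refine Finset.eq_of_subset_of_card_le (fun x hx => ?_) ?_
    · obtain ⟨v, hv, rfl⟩ := Finset.mem_image.mp hx
      by_cases hvR : v ∈ R
      · exact himg ▸ Finset.mem_image_of_mem φ hvR
      · rwa [hfix v hvR]
    · rw [Finset.card_image_of_injOn ((injOn_facet_of_proper hfg hg i).mono hSi)]
  rw [ridges_eq_image hfg hg]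
  refine lt_of_le_of_ne Finset.card_image_le fun hcard => hRS ?_
  exact Finset.injOn_of_card_image_eq hcard hR.mem_ridges hS.mem_ridges (himg.trans hφS.symm)

lemma IsGluing.card_vertices (h : IsGluing f g R S) :
    (vertices g).card + (R \ S).card = (vertices f).card := by
  obtain ⟨hR, hS, -, φ, hfix, himg, hfg⟩ := h
  have hRv := subset_vertices_of_mem_ridges hR.mem_ridges
  have hSv := subset_vertices_of_mem_ridges hS.mem_ridges
  have hφR : ∀ v ∈ R, φ v ∈ S := fun v hv => himg ▸ Finset.mem_image_of_mem φ hv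
  have hvg : vertices g = vertices f \ (R \ S) := by
    rw [vertices_eq_image hfg]
    ext x
    simp only [Finset.mem_image, Finset.mem_sdiff, not_and, not_not]
    constructor
    · rintro ⟨v, hv, rfl⟩
      by_cases hvR : v ∈ R
      · exact ⟨hSv (hφR v hvR), fun _ => hφR v hvR⟩
      · rw [hfix v hvR]
        exact ⟨hv, fun h => absurd h hvR⟩
    · rintro ⟨hx, hxS⟩
      by_cases hxR : x ∈ R
      · obtain ⟨v, hv, hvx⟩ := Finset.mem_image.mp (himg ▸ hxS hxR)
        exact ⟨v, hRv hv, hvx⟩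
      · exact ⟨x, hx, hfix x hxR⟩
  rw [hvg, Finset.card_sdiff_of_subset (Finset.sdiff_subset.trans hRv),
    Nat.sub_add_cancel (Finset.card_le_card (Finset.sdiff_subset.trans hRv))]

end Gluing

variable {s t g : Config V d N}

lemma exists_card_vertices_ridges_of_lcSteps (hd : 0 < d) (h : ReflTransGen LCStep t g)
    (hg : Proper g) :
    Proper t ∧ ∃ L, (vertices t).card = (vertices g).card + L ∧
      (ridges g).card + L ≤ (ridges t).card := by
  induction h with
  | refl => exact ⟨hg, 0, rfl, le_rfl⟩
  | tail _ hstep ih =>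
    obtain ⟨R, S, hglue, hRS⟩ := hstep.exists_isGluing
    obtain ⟨ht, L, hv, hr⟩ := ih (hglue.proper_left hg)
    have hsdiff : (R \ S).card = 1 := by
      have hRd : R.card = d := hglue.1.1
      have := Finset.card_sdiff_add_card_inter R S
      omega
    have hvert := hglue.card_vertices
    have hridge := hglue.card_ridges_lt hg
    exact ⟨ht, L + 1, by omega, by omega⟩

lemma exists_card_vertices_ridges_of_uniteSteps (hd : 0 < d) (h : ReflTransGen UniteStep s t)
    (ht : Proper t) :
    Proper s ∧ ∃ u, (vertices t).card + d * u = (vertices s).card ∧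
      (ridges t).card + u ≤ (ridges s).card := by
  induction h with
  | refl => exact ⟨ht, 0, rfl, le_rfl⟩
  | tail _ hstep ih =>
    obtain ⟨R, S, hglue, hdisj⟩ := hstep.exists_isGluing hd
    obtain ⟨hs, u, hv, hr⟩ := ih (hglue.proper_left ht)
    have hsdiff : (R \ S).card = d := by rw [Finset.sdiff_eq_self_of_disjoint hdisj, hglue.1.1]
    have hvert := hglue.card_vertices
    have hridge := hglue.card_ridges_lt ht
    exact ⟨hs, u + 1, by rw [Nat.mul_succ]; omega, by omega⟩

theorem IsLC.exists_card_vertices_ridges {f : Config V d N} (hd : 0 < d) (hf : Proper f)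
    (h : IsLC f) :
    ∃ u L, (vertices f).card + L + d * u = N * (d + 1) ∧
      (ridges f).card + L + u ≤ N * (d + 1) := by
  obtain ⟨t, g, ⟨htree, -⟩, hlc, hrep⟩ := h
  obtain ⟨hg, hvg, hrg⟩ := hrep.proper_and_card_eq hf
  obtain ⟨ht, L, hvt, hrt⟩ := exists_card_vertices_ridges_of_lcSteps hd hlc hg
  obtain ⟨-, u, hvs, hrs⟩ := exists_card_vertices_ridges_of_uniteSteps hd htree ht
  have := card_ridges_le (proper_std (d := d) (N := N))
  rw [card_vertices_std] at hvs
  exact ⟨u, L, by omega, by omega⟩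

end Counting

/-- The outer triangle `0 1 2` and the inner triangle `3 4 5`, joined by six triangles;
`6` is left free as the apex of the cone. -/
def annulus : Config (Fin 7) 2 6 :=
  ![![0, 1, 3], ![1, 3, 4], ![1, 2, 4], ![2, 4, 5], ![2, 0, 5], ![0, 5, 3]]

set_option maxRecDepth 40000 in
lemma isPseudo_annulus : IsPseudo annulus :=
  ⟨by unfold Proper Function.Injective; decide, by decide⟩

lemma apex_not_mem_facet_annulus : ∀ i, (6 : Fin 7) ∉ facet annulus i := by
  decide

set_option maxRecDepth 40000 in
lemma isPseudo_cone_annulus : IsPseudo (cone annulus 6) :=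
  ⟨by unfold Proper Function.Injective; decide, by decide⟩

theorem not_isLC_cone_annulus : ¬ IsLC (cone annulus 6) := by
  intro h
  obtain ⟨u, L, hv, hr⟩ := h.exists_card_vertices_ridges (by norm_num) isPseudo_cone_annulus.1
  have hv7 : (vertices (cone annulus 6)).card = 7 := by decide
  have hr18 : (ridges (cone annulus 6)).card = 18 := by decide
  omega

section Unite

variable {V : Type*} [DecidableEq V] {d N : ℕ}

lemma le_card_inter_of_dualGraph_adj {f : Config V d N} {a b : Fin N}
    (h : (dualGraph f).Adj a b) :
    d ≤ (facet f a ∩ facet f b).card := by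
  rw [dualGraph, SimpleGraph.fromRel_adj] at h
  obtain ⟨R, hR, ha, hb⟩ | ⟨R, hR, hb, ha⟩ := h.2 <;>
    exact hR.ge.trans (Finset.card_le_card (Finset.subset_inter ha hb))

lemma eq_of_reachable_of_forall_adj {α β : Type*} {G : SimpleGraph α} {c : α → β}
    (h : ∀ a b, G.Adj a b → c a = c b) {x y : α} (hxy : G.Reachable x y) : c x = c y := by
  obtain ⟨w⟩ := hxy
  induction w with
  | nil => rfl
  | cons hadj _ ih => exact (h _ _ hadj).trans ih

lemma uniteStep_of_coloring {β : Type*} {f g : Config V d N} {R S : Finset V} {φ : V → V}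
    (c : Fin N → β) (hR : IsBdryRidge f R) (hS : IsBdryRidge f S) (hRS : Disjoint R S)
    (hc : ∀ a b, d ≤ (facet f a ∩ facet f b).card → c a = c b)
    (hcRS : ∀ i ∈ cells f R, ∀ i' ∈ cells f S, c i ≠ c i')
    (hφ : ∀ v, v ∉ R → φ v = v) (hinj : (R.image φ).card = R.card) (himg : R.image φ = S)
    (hfg : ∀ i j, g i j = φ (f i j)) : UniteStep f g :=
  ⟨R, S, hR, hS, hRS,
    fun i hi i' hi' hr => hcRS i hi i' hi'
      (eq_of_reachable_of_forall_adj (fun a b h => hc a b (le_card_inter_of_dualGraph_adj h)) hr),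
    φ, hφ, Finset.card_image_iff.mp hinj, himg, hfg⟩

end Unite

lemma connected_of_adj_castSucc_succ {n : ℕ} {G : SimpleGraph (Fin (n + 1))}
    (h : ∀ k : Fin n, G.Adj k.castSucc k.succ) : G.Connected := by
  refine (SimpleGraph.pathGraph_connected n).mono fun u v huv => ?_
  have key : ∀ u v : Fin (n + 1), u.val + 1 = v.val → G.Adj u v := fun u v huv => by
    obtain ⟨k, rfl, rfl⟩ : ∃ k : Fin n, k.castSucc = u ∧ k.succ = v :=
      ⟨⟨u, by omega⟩, rfl, Fin.ext (by simp [huv])⟩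
    exact h k
  rcases SimpleGraph.pathGraph_adj.mp huv with huv | huv
  · exact key u v huv
  · exact (key v u huv).symm

/-- The cone over `annulus` cut open along the triangle `6 0 3`: a path of six tetrahedra, the
`k`-th of which brings one new vertex, in its own slot `(k, j)` of the vertex pool of `std 3 6`. -/
def coneTree : Config (Fin 6 × Fin 4) 3 6 :=
  ![![(0, 0), (0, 1), (0, 2), (0, 3)], ![(0, 0), (0, 2), (0, 3), (1, 3)],
    ![(0, 0), (0, 2), (2, 2), (1, 3)], ![(0, 0), (2, 2), (1, 3), (3, 3)],
    ![(0, 0), (2, 2), (4, 2), (3, 3)], ![(0, 0), (4, 2), (3, 3), (5, 3)]]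

def coneTreeStage (k : Fin 6) : Config (Fin 6 × Fin 4) 3 6 :=
  fun i => if i ≤ k then coneTree i else std 3 6 i

/-- Glues tetrahedron `k` of `std 3 6` onto the tetrahedra before it; it fixes the new vertex. -/
def attachMap (k : Fin 6) (v : Fin 6 × Fin 4) : Fin 6 × Fin 4 :=
  if v.1 = k then coneTree k v.2 else v

def attachRidge (k : Fin 6) : Finset (Fin 6 × Fin 4) :=
  (facet (std 3 6) k).filter fun v => attachMap k v ≠ v

lemma uniteStep_coneTreeStage (k : Fin 5) :
    UniteStep (coneTreeStage k.castSucc) (coneTreeStage k.succ) := by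
  refine uniteStep_of_coloring (R := attachRidge k.succ) (φ := attachMap k.succ)
    (fun i => decide (i ≤ k.castSucc)) ⟨?_, ?_⟩ ⟨?_, ?_⟩ ?_ ?_ ?_ ?_ ?_ rfl ?_ <;>
    revert k <;> decide

lemma reflTransGen_uniteStep_coneTreeStage (k : Fin 6) :
    ReflTransGen UniteStep (std 3 6) (coneTreeStage k) := by
  induction k using Fin.induction with
  | zero =>
    have h0 : coneTreeStage 0 = std 3 6 := by decide
    exact h0 ▸ ReflTransGen.refl
  | succ k ih => exact ih.tail (uniteStep_coneTreeStage k)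

lemma isTreeOfSimplicesC_coneTree : IsTreeOfSimplicesC coneTree := by
  refine ⟨?_, connected_of_adj_castSucc_succ fun k => ?_⟩
  · have h5 : coneTreeStage 5 = coneTree := by decide
    exact h5 ▸ reflTransGen_uniteStep_coneTreeStage 5
  · rw [dualGraph, SimpleGraph.fromRel_adj]
    refine ⟨?_, Or.inl ⟨facet coneTree k.castSucc ∩ facet coneTree k.succ, ?_,
      Finset.inter_subset_left, Finset.inter_subset_right⟩⟩ <;> revert k <;> decide

def closingMap (v : Fin 6 × Fin 4) : Fin 6 × Fin 4 :=
  if v = (0, 1) then (4, 2) else if v = (0, 3) then (5, 3) else v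

def coneGlued : Config (Fin 6 × Fin 4) 3 6 :=
  fun i j => closingMap (coneTree i j)

lemma mogamiStep_coneTree : MogamiStep coneTree coneGlued :=
  ⟨{(0, 0), (0, 1), (0, 3)}, {(0, 0), (4, 2), (5, 3)}, ⟨by decide, by decide⟩,
    ⟨by decide, by decide⟩, by decide, by decide, closingMap, by decide,
    Finset.card_image_iff.mp (by decide), by decide, fun _ _ => rfl⟩

def coneLabel : Fin 6 × Fin 4 → Fin 7 :=
  Function.uncurry
    ![![6, 6, 1, 6], ![6, 6, 6, 4], ![6, 6, 2, 6], ![6, 6, 6, 5], ![6, 6, 0, 6], ![6, 6, 6, 3]]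

lemma represents_coneGlued : Represents coneGlued (cone annulus 6) := by
  refine ⟨coneLabel, ?_, by decide⟩
  rintro _ ⟨i, j, rfl⟩ _ ⟨i', j', rfl⟩
  revert i j i' j'
  decide

theorem isMogami_cone_annulus : IsMogami (cone annulus 6) :=
  ⟨coneTree, coneGlued, isTreeOfSimplicesC_coneTree, ReflTransGen.single mogamiStep_coneTree,
    represents_coneGlued⟩

lemma mem_realization_annulus {x : Fin 7 → ℝ} :
    x ∈ realization annulus ↔ (∀ v, 0 ≤ x v) ∧ x 0 + x 1 + x 2 + x 3 + x 4 + x 5 + x 6 = 1 ∧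
      (x 2 = 0 ∧ x 4 = 0 ∧ x 5 = 0 ∧ x 6 = 0 ∨ x 0 = 0 ∧ x 2 = 0 ∧ x 5 = 0 ∧ x 6 = 0 ∨
        x 0 = 0 ∧ x 3 = 0 ∧ x 5 = 0 ∧ x 6 = 0 ∨ x 0 = 0 ∧ x 1 = 0 ∧ x 3 = 0 ∧ x 6 = 0 ∨
        x 1 = 0 ∧ x 3 = 0 ∧ x 4 = 0 ∧ x 6 = 0 ∨ x 1 = 0 ∧ x 2 = 0 ∧ x 4 = 0 ∧ x 6 = 0) := by
  simp [realization, Fin.sum_univ_seven, Fin.exists_fin_succ, Fin.forall_fin_succ, facet, annulus]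

/-- The affine map sending the vertices `0, 1, 2` to `(2, 2), (-4, 2), (2, -4)` and `3, 4, 5` to
half of these: `annulus` becomes the region between two homothetic triangles. -/
noncomputable def toPlane (x : Fin 7 → ℝ) : EuclideanSpace ℝ (Fin 2) :=
  !₂[2 * x 0 - 4 * x 1 + 2 * x 2 + x 3 - 2 * x 4 + x 5,
    2 * x 0 + 2 * x 1 - 4 * x 2 + x 3 + x 4 - 2 * x 5]

lemma toPlane_apply_zero (x : Fin 7 → ℝ) :
    toPlane x 0 = 2 * x 0 - 4 * x 1 + 2 * x 2 + x 3 - 2 * x 4 + x 5 := by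
  simp [toPlane]

lemma toPlane_apply_one (x : Fin 7 → ℝ) :
    toPlane x 1 = 2 * x 0 + 2 * x 1 - 4 * x 2 + x 3 + x 4 - 2 * x 5 := by
  simp [toPlane]

/-- The gauge of the triangle with vertices `(1, 1), (-2, 1), (1, -2)`. -/
noncomputable def triGauge (p : EuclideanSpace ℝ (Fin 2)) : ℝ :=
  max (p 0) (max (p 1) (-p 0 - p 1))

/-- Barycentric coordinates of `p = (s, t)` in the triangle of `toPlane '' realization annulus`
containing it: the sector is the one where `s`, `t` or `-s - t` is largest, and each sector is
cut into two triangles along a diagonal. -/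
noncomputable def fromPlane (p : EuclideanSpace ℝ (Fin 2)) : Fin 7 → ℝ :=
  let s := p 0
  let t := p 1
  if 0 ≤ s + 2 * t then
    if s ≤ t then
      if 6 ≤ s + 5 * t then ![(s + 5 * t - 6) / 6, (t - s) / 6, 0, 2 - t, 0, 0, 0]
      else ![0, t - 1, 0, (s + 2 * t) / 3, (6 - s - 5 * t) / 3, 0, 0]
    else
      if 4 * s - 6 ≤ t then ![s - 1, 0, 0, (6 - 4 * s + t) / 3, 0, (s - t) / 3, 0]
      else ![(2 * s + t) / 6, 0, (4 * s - t - 6) / 6, 0, 0, 2 - s, 0]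
  else
    if 0 ≤ 2 * s + t then
      if 4 * s - 6 ≤ t then ![s - 1, 0, 0, (6 - 4 * s + t) / 3, 0, (s - t) / 3, 0]
      else ![(2 * s + t) / 6, 0, (4 * s - t - 6) / 6, 0, 0, 2 - s, 0]
    else
      if -5 * s - 4 * t ≤ 6 then
        ![0, 0, -s - t - 1, 0, (-2 * s - t) / 3, (6 + 5 * s + 4 * t) / 3, 0]
      else ![0, (-5 * s - 4 * t - 6) / 6, (-s - 2 * t) / 6, 0, 2 + s + t, 0, 0]

lemma continuous_toPlane : Continuous toPlane := by
  unfold toPlane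
  fun_prop

lemma continuous_triGauge : Continuous triGauge := by
  unfold triGauge
  fun_prop

lemma triGauge_toPlane_mem_Icc {x : Fin 7 → ℝ} (hx : x ∈ realization annulus) :
    1 ≤ triGauge (toPlane x) ∧ triGauge (toPlane x) ≤ 2 := by
  obtain ⟨hnn, hsum, hface⟩ := mem_realization_annulus.mp hx
  have := hnn 0; have := hnn 1; have := hnn 2; have := hnn 3; have := hnn 4; have := hnn 5
  have := hnn 6
  simp only [triGauge, toPlane_apply_zero, toPlane_apply_one]
  refine ⟨?_, max_le (by linarith) (max_le (by linarith) (by linarith))⟩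
  rcases hface with ⟨_, _, _, _⟩ | ⟨_, _, _, _⟩ | ⟨_, _, _, _⟩ | ⟨_, _, _, _⟩ | ⟨_, _, _, _⟩ |
    ⟨_, _, _, _⟩
  all_goals first
    | exact le_max_of_le_left (by linarith)
    | exact le_max_of_le_right (le_max_of_le_left (by linarith))
    | exact le_max_of_le_right (le_max_of_le_right (by linarith))

lemma toPlane_fromPlane (p : EuclideanSpace ℝ (Fin 2)) : toPlane (fromPlane p) = p := by
  ext i
  fin_cases i <;> simp only [fromPlane, toPlane] <;> split_ifs <;> simp <;> ring

lemma fromPlane_mem_realization {p : EuclideanSpace ℝ (Fin 2)} (h1 : 1 ≤ triGauge p)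
    (h2 : triGauge p ≤ 2) : fromPlane p ∈ realization annulus := by
  simp only [triGauge, max_le_iff, le_max_iff] at h1 h2
  rw [mem_realization_annulus]
  simp only [fromPlane]
  rcases h1 with h1 | h1 | h1 <;> split_ifs <;> simp [Fin.forall_fin_succ] <;>
    repeat' apply And.intro
  all_goals linarith

set_option maxHeartbeats 1000000 in
lemma fromPlane_toPlane {x : Fin 7 → ℝ} (hx : x ∈ realization annulus) :
    fromPlane (toPlane x) = x := by
  obtain ⟨hnn, hsum, hface⟩ := mem_realization_annulus.mp hx
  have := hnn 0; have := hnn 1; have := hnn 2; have := hnn 3; have := hnn 4; have := hnn 5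
  have := hnn 6
  have hs := toPlane_apply_zero x
  have ht := toPlane_apply_one x
  generalize toPlane x = p at hs ht
  simp only [fromPlane]
  rcases hface with ⟨_, _, _, _⟩ | ⟨_, _, _, _⟩ | ⟨_, _, _, _⟩ | ⟨_, _, _, _⟩ | ⟨_, _, _, _⟩ |
    ⟨_, _, _, _⟩ <;> split_ifs <;> funext v <;> fin_cases v <;> simp <;> linarith

section Rescale

variable {E : Type*} [NormedAddCommGroup E] [NormedSpace ℝ E]

structure IsRadialGauge (μ : E → ℝ) : Prop where
  map_smul : ∀ c : ℝ, 0 ≤ c → ∀ p, μ (c • p) = c * μ p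
  pos : ∀ p, p ≠ 0 → 0 < μ p

variable {μ ν : E → ℝ}

lemma IsRadialGauge.map_zero (hμ : IsRadialGauge μ) : μ 0 = 0 := by
  simpa using hμ.map_smul 0 le_rfl 0

lemma isRadialGauge_norm : IsRadialGauge (‖·‖ : E → ℝ) :=
  ⟨fun c hc p => by rw [norm_smul, Real.norm_of_nonneg hc], fun _ => norm_pos_iff.mpr⟩

/-- Moves each point along its ray from the level set `μ = r` to the level set `ν = r`. -/
noncomputable def rescale (μ ν : E → ℝ) (p : E) : E :=
  (μ p / ν p) • p

lemma apply_rescale (hμ : IsRadialGauge μ) (hν : IsRadialGauge ν) (p : E) :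
    ν (rescale μ ν p) = μ p := by
  rcases eq_or_ne p 0 with rfl | hp
  · rw [rescale, smul_zero, hμ.map_zero, hν.map_zero]
  · rw [rescale, hν.map_smul _ (div_nonneg (hμ.pos p hp).le (hν.pos p hp).le),
      div_mul_cancel₀ _ (hν.pos p hp).ne']

lemma rescale_rescale (hμ : IsRadialGauge μ) (hν : IsRadialGauge ν) (p : E) :
    rescale ν μ (rescale μ ν p) = p := by
  rcases eq_or_ne p 0 with rfl | hp
  · simp [rescale]
  have hμp := hμ.pos p hp
  have hνp := hν.pos p hp
  have hc : 0 ≤ μ p / ν p := div_nonneg hμp.le hνp.le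
  rw [rescale, rescale, hμ.map_smul _ hc, hν.map_smul _ hc, smul_smul]
  convert one_smul ℝ p
  field_simp

lemma bijOn_rescale (hμ : IsRadialGauge μ) (hν : IsRadialGauge ν) (a b : ℝ) :
    Set.BijOn (rescale μ ν) {p | a ≤ μ p ∧ μ p ≤ b} {p | a ≤ ν p ∧ ν p ≤ b} := by
  refine Set.InvOn.bijOn ⟨fun p _ => rescale_rescale hμ hν p, fun p _ => rescale_rescale hν hμ p⟩
    (fun p hp => ?_) (fun p hp => ?_)
  · show a ≤ ν _ ∧ ν _ ≤ b
    rwa [apply_rescale hμ hν]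
  · show a ≤ μ _ ∧ μ _ ≤ b
    rwa [apply_rescale hν hμ]

lemma continuousOn_rescale (hμ : Continuous μ) (hν : Continuous ν) (hν' : IsRadialGauge ν) :
    ContinuousOn (rescale μ ν) {p | p ≠ 0} :=
  ((hμ.continuousOn.div hν.continuousOn fun p hp => (hν'.pos p hp).ne').smul continuousOn_id)

end Rescale

lemma _root_.Set.BijOn.nonempty_homeomorph {X Y : Type*} [TopologicalSpace X]
    [TopologicalSpace Y] [T2Space Y] {s : Set X} {t : Set Y} {F : X → Y} (h : Set.BijOn F s t) (hs : IsCompact s)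
    (hF : ContinuousOn F s) : Nonempty (s ≃ₜ t) :=
  have := isCompact_iff_compactSpace.mp hs
  ⟨Continuous.homeoOfEquivCompactToT2 (f := h.equiv F) (hF.mapsToRestrict h.mapsTo)⟩

lemma isCompact_realization {V : Type*} [DecidableEq V] [Fintype V] {d N : ℕ}
    (f : Config V d N) : IsCompact (realization f) := by
  have : realization f = stdSimplex ℝ V ∩ ⋃ i, ⋂ v ∈ (facet f i)ᶜ, {x | x v = 0} := by
    ext x
    simp [realization, stdSimplex, not_imp_comm, and_assoc]
  rw [this]
  exact (isCompact_stdSimplex ℝ V).inter_right (isClosed_iUnion_of_finite fun i =>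
    isClosed_biInter fun v _ => isClosed_eq (continuous_apply v) continuous_const)

lemma isRadialGauge_triGauge : IsRadialGauge triGauge := by
  refine ⟨fun c hc p => ?_, fun p hp => ?_⟩
  · simp only [triGauge, PiLp.smul_apply, smul_eq_mul]
    rw [show -(c * p 0) - c * p 1 = c * (-p 0 - p 1) by ring, ← mul_max_of_nonneg _ _ hc,
      ← mul_max_of_nonneg _ _ hc]
  · by_contra hle
    simp only [triGauge, not_lt, max_le_iff] at hle
    exact hp (by ext i; fin_cases i <;> simp <;> linarith)

lemma bijOn_toPlane :
    Set.BijOn toPlane (realization annulus) {p | 1 ≤ triGauge p ∧ triGauge p ≤ 2} :=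
  Set.InvOn.bijOn ⟨fun _ hx => fromPlane_toPlane hx, fun p _ => toPlane_fromPlane p⟩
    (fun _ hx => triGauge_toPlane_mem_Icc hx) (fun _ hp => fromPlane_mem_realization hp.1 hp.2)

theorem nonempty_homeomorph_realization_annulus :
    Nonempty (realization annulus ≃ₜ
      (closedBall (0 : EuclideanSpace ℝ (Fin 2)) 2 \ ball 0 1 :
        Set (EuclideanSpace ℝ (Fin 2)))) := by
  have hann : closedBall (0 : EuclideanSpace ℝ (Fin 2)) 2 \ ball 0 1 =
      {p | 1 ≤ ‖p‖ ∧ ‖p‖ ≤ 2} := by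
    ext p
    simp [and_comm]
  have hne : Set.MapsTo toPlane (realization annulus) {p | p ≠ 0} := fun x hx h0 => by
    have := (triGauge_toPlane_mem_Icc hx).1
    rw [h0, isRadialGauge_triGauge.map_zero] at this
    norm_num at this
  have hbij := (bijOn_rescale isRadialGauge_triGauge isRadialGauge_norm 1 2).comp bijOn_toPlane
  have hcont := (continuousOn_rescale continuous_triGauge continuous_norm isRadialGauge_norm).comp
    continuous_toPlane.continuousOn hne
  rw [hann]
  exact hbij.nonempty_homeomorph (isCompact_realization annulus) hcont

/-- there is a 3-pseudomanifold that is Mogami but not LC; in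
particular the cone over a triangulated annulus from an external apex. -/
theorem stmt13 :
    ∃ (M N : ℕ) (A : Config (Fin M) 2 N) (v : Fin M),
      IsPseudo A ∧ (∀ i, v ∉ facet A i) ∧
      Nonempty ((realization A) ≃ₜ
        ((Metric.closedBall (0 : EuclideanSpace ℝ (Fin 2)) 2 \
          Metric.ball (0 : EuclideanSpace ℝ (Fin 2)) 1) :
            Set (EuclideanSpace ℝ (Fin 2)))) ∧
      IsPseudo (cone A v) ∧ IsMogami (cone A v) ∧ ¬ IsLC (cone A v) :=
  ⟨7, 6, annulus, 6, isPseudo_annulus, apex_not_mem_facet_annulus,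
    nonempty_homeomorph_realization_annulus, isPseudo_cone_annulus, isMogami_cone_annulus,
    not_isLC_cone_annulus⟩

end MogamiPaper
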